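/- The power series ∑_{n=0}^∞ T(n) h^n, where T(0)=0 and 2T(n+1) − T(n) = (1/2)_n/n!, equals h / ((2−h)·√(1−h)) for |h| < 1. -/

import Mathlib

/-!
The numbers `(1/2)_n / n!` are the coefficients of the binomial series of `(1 - h)^(-1/2)`.
Multiplying the recurrence `2 T(n+1) - T(n) = (1/2)_n / n!` by `h^(n+1)` and summing turns it
into `(2 - h) F(h) = h (1 - h)^(-1/2)` for the generating function `F` of `T`; the series `F`
converges for `|h| < 1` because `T` inherits the bound `|(1/2)_n / n!| ≤ 1`.
-/

/-- Pochhammer symbol (rising factorial) `(x)_n`. -/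
noncomputable def poch (x : ℝ) (n : ℕ) : ℝ := (ascPochhammer ℝ n).eval x

theorem poch_div_factorial_eq_choose (a : ℝ) (n : ℕ) :
    poch a n / n.factorial = Ring.choose (a + n - 1) n := by
  rw [← Ring.multichoose_eq, div_eq_iff (by positivity), mul_comm, ← nsmul_eq_mul,
    Ring.factorial_nsmul_multichoose_eq_ascPochhammer, poch,
    Polynomial.ascPochhammer_smeval_eq_eval]

theorem hasSum_poch_div_factorial_mul_pow (a : ℝ) {x : ℝ} (hx : |x| < 1) :
    HasSum (fun n ↦ poch a n / n.factorial * x ^ n) (1 / (1 - x) ^ a) := by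
  have := (Real.one_div_one_sub_rpow_hasFPowerSeriesOnBall_zero a).hasSum
    (y := x) (by simpa [enorm_eq_nnnorm, ← NNReal.coe_lt_coe] using hx)
  simpa [poch_div_factorial_eq_choose, FormalMultilinearSeries.ofScalars_apply_eq, mul_comm]
    using this

theorem poch_le_poch {x y : ℝ} (hx : 0 < x) (hxy : x ≤ y) (n : ℕ) : poch x n ≤ poch y n := by
  induction n with
  | zero => simp [poch]
  | succ n ih =>
    simp only [poch, ascPochhammer_succ_eval] at ih ⊢
    exact mul_le_mul ih (by linarith) (by positivity) ((ascPochhammer_pos n x hx).le.trans ih)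

theorem abs_poch_div_factorial_le_one {x : ℝ} (hx₀ : 0 < x) (hx₁ : x ≤ 1) (n : ℕ) :
    |poch x n / n.factorial| ≤ 1 := by
  have hpos : 0 < poch x n := ascPochhammer_pos n x hx₀
  rw [abs_of_pos (by positivity), div_le_one (by positivity)]
  simpa [poch, ascPochhammer_eval_one] using poch_le_poch hx₀ hx₁ n

theorem abs_le_of_two_mul_succ_sub {T c : ℕ → ℝ} {M : ℝ} (hT0 : T 0 = 0)
    (hrec : ∀ n, 2 * T (n + 1) - T n = c n) (hc : ∀ n, |c n| ≤ M) (n : ℕ) : |T n| ≤ M := by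
  induction n with
  | zero => simpa [hT0] using (abs_nonneg _).trans (hc 0)
  | succ n ih =>
    obtain ⟨hc₁, hc₂⟩ := abs_le.mp (hc n)
    obtain ⟨ih₁, ih₂⟩ := abs_le.mp ih
    exact abs_le.mpr ⟨by linarith [hrec n], by linarith [hrec n]⟩

theorem hasSum_of_two_mul_succ_sub {T c : ℕ → ℝ} {M C x : ℝ} (hT0 : T 0 = 0)
    (hrec : ∀ n, 2 * T (n + 1) - T n = c n) (hc : ∀ n, |c n| ≤ M) (hx : |x| < 1)
    (hC : HasSum (fun n ↦ c n * x ^ n) C) :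
    HasSum (fun n ↦ T n * x ^ n) (x * C / (2 - x)) := by
  obtain ⟨F, hF⟩ : Summable (fun n ↦ T n * x ^ n) := by
    refine .of_norm_bounded (g := fun n ↦ M * |x| ^ n)
      ((summable_geometric_of_lt_one (abs_nonneg x) hx).mul_left M) fun n ↦ ?_
    rw [Real.norm_eq_abs, abs_mul, abs_pow]
    gcongr
    exact abs_le_of_two_mul_succ_sub hT0 hrec hc n
  have hshift : HasSum (fun n ↦ 2 * (T (n + 1) * x ^ (n + 1))) (2 * F) := by
    simpa [hT0] using ((hasSum_nat_add_iff' 1).mpr hF).mul_left 2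
  have hstep : HasSum (fun n ↦ 2 * (T (n + 1) * x ^ (n + 1))) (x * (F + C)) := by
    have hterm (n : ℕ) : 2 * (T (n + 1) * x ^ (n + 1)) = x * (T n * x ^ n + c n * x ^ n) := by
      rw [← hrec n]; ring
    simpa only [hterm] using (hF.add hC).mul_left x
  have h2x : 2 - x ≠ 0 := by linarith [(abs_lt.mp hx).2]
  convert hF using 1
  field_simp
  linarith [hshift.unique hstep]

theorem stmt9 (T : ℕ → ℝ) (hT0 : T 0 = 0)
    (hTrec : ∀ n : ℕ, 2 * T (n + 1) - T n = poch (1/2) n / n.factorial)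
    (h : ℝ) (hh : |h| < 1) :
    ∑' n : ℕ, T n * h ^ n = h / ((2 - h) * Real.sqrt (1 - h)) := by
  have hT := hasSum_of_two_mul_succ_sub hT0 hTrec
    (abs_poch_div_factorial_le_one (by norm_num) (by norm_num)) hh
    (hasSum_poch_div_factorial_mul_pow (1 / 2) hh)
  rw [hT.tsum_eq, Real.sqrt_eq_rpow, mul_one_div, div_div, mul_comm]
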